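/- Let S be a minimum toll set of the lexicographic product G ∘ H, where G and H are non-trivial and H is not complete. Then for every vertex g of G, the number of vertices of S in the layer {g} × V(H) belongs to {0, 1, 2, tn(H)}. -/

import Mathlib

open SimpleGraph

/-- A walk `W` between `u` and `v` is a *tolled walk* if either `u = v` and `W` is trivial,
or `u` and `v` are adjacent and `W` is the single-edge walk, or `u ≠ v` are non-adjacent,
`W` has at least one interior vertex, `u` is adjacent exactly to the interior vertex
at position 1 and `v` exactly to the interior vertex at position `W.length - 1`. -/
def IsTolledWalk {V : Type*} (G : SimpleGraph V) {u v : V} (W : G.Walk u v) : Prop :=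
  (u = v ∧ W.length = 0) ∨
  (G.Adj u v ∧ W.support = [u, v]) ∨
  (¬ G.Adj u v ∧ u ≠ v ∧ 2 ≤ W.length ∧
    (∀ i, 0 < i → i < W.length → (G.Adj u (W.support.getD i u) ↔ i = 1)) ∧
    (∀ i, 0 < i → i < W.length → (G.Adj v (W.support.getD i u) ↔ i = W.length - 1)))

/-- The toll interval between `u` and `v`: vertices lying on some tolled walk. -/
def tollInterval {V : Type*} (G : SimpleGraph V) (u v : V) : Set V :=
  {x | ∃ W : G.Walk u v, IsTolledWalk G W ∧ x ∈ W.support}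

/-- A toll set: the toll intervals between its pairs cover the vertex set. -/
def IsTollSet {V : Type*} (G : SimpleGraph V) (S : Set V) : Prop :=
  ∀ x : V, ∃ u ∈ S, ∃ v ∈ S, x ∈ tollInterval G u v

/-- The toll number: minimum size of a toll set. -/
noncomputable def tollNumber {V : Type*} (G : SimpleGraph V) : ℕ :=
  sInf {n | ∃ S : Set V, S.Finite ∧ S.ncard = n ∧ IsTollSet G S}

/-- `v` is a cut vertex if deleting it disconnects the graph. -/
def IsCutVertex {V : Type*} (G : SimpleGraph V) (v : V) : Prop :=
  ¬ (G.induce {w | w ≠ v}).Preconnected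

/-- The extreme vertices of `G` with respect to toll convexity. -/
def extremeVertices {V : Type*} (G : SimpleGraph V) : Set V :=
  {s | ∀ x y : V, x ≠ s → y ≠ s → s ∉ tollInterval G x y}

/-- The lexicographic product of simple graphs. -/
def lexProd {V W : Type*} (G : SimpleGraph V) (H : SimpleGraph W) : SimpleGraph (V × W) where
  Adj a b := G.Adj a.1 b.1 ∨ (a.1 = b.1 ∧ H.Adj a.2 b.2)
  symm := by
    constructor
    rintro a b (h | ⟨h1, h2⟩)
    · exact Or.inl h.symm
    · exact Or.inr ⟨h1.symm, h2.symm⟩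
  loopless := by
    constructor
    rintro a (h | ⟨_, h⟩)
    · exact G.loopless.irrefl _ h
    · exact H.loopless.irrefl _ h

/-!
The layer `M = {g} × V(H)` is a module of `G ∘ H`: a vertex outside `M` is adjacent to all of `M`
or to none of it. Tolled walks see `M` only through this: a tolled walk between two vertices of
`M` stays in `M` or has length 2; one from `M` to the outside meets `M` only at its start; and a
tolled walk between two vertices outside `M` that meets `M` can be rerouted through any vertex of
`M`. Hence `S ∩ M` can be replaced by any set of layer vertices containing a non-adjacent pair,
as long as the layer itself stays covered. A copy of a minimum toll set of `H` does this, so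
`|S ∩ M| ≤ tn(H)`. If `|S ∩ M| ≥ 3`, minimality forbids replacing `S ∩ M` by a non-adjacent pair,
so every vertex of `M` is covered by a pair meeting `M`; then the projection of `S ∩ M` to `H` is
a toll set of `H`, and `tn(H) ≤ |S ∩ M|`.
-/

section General

variable {V : Type*} {G : SimpleGraph V}

theorem Nat.exists_le_lt_and_not_succ {P : ℕ → Prop} {a b : ℕ} (hab : a ≤ b) (ha : P a)
    (hb : ¬ P b) : ∃ j, a ≤ j ∧ j < b ∧ P j ∧ ¬ P (j + 1) := by
  induction b, hab using Nat.le_induction with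
  | base => exact absurd ha hb
  | succ b hab ih =>
    by_cases h : P b
    · exact ⟨b, hab, b.lt_succ_self, h, hb⟩
    · obtain ⟨j, haj, hjb, hj⟩ := ih h
      exact ⟨j, haj, hjb.trans b.lt_succ_self, hj⟩

/-- A tolled walk recorded by its vertex sequence `f 0, …, f n` (see
`isTolledWalk_iff_isTolledSeq`); the values of `f` beyond `n` play no role. -/
structure IsTolledSeq (G : SimpleGraph V) (f : ℕ → V) (n : ℕ) : Prop where
  adj : ∀ i < n, G.Adj (f i) (f (i + 1))
  ne : 2 ≤ n → f 0 ≠ f n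
  not_adj : 2 ≤ n → ¬ G.Adj (f 0) (f n)
  adj_first : ∀ i, 0 < i → i < n → (G.Adj (f 0) (f i) ↔ i = 1)
  adj_last : ∀ i, 0 < i → i < n → (G.Adj (f n) (f i) ↔ i = n - 1)

theorem SimpleGraph.Walk.exists_getVert_eq (f : ℕ → V) (n : ℕ)
    (hf : ∀ i < n, G.Adj (f i) (f (i + 1))) :
    ∃ W : G.Walk (f 0) (f n), W.length = n ∧ ∀ i ≤ n, W.getVert i = f i := by
  induction n generalizing f with
  | zero => exact ⟨.nil, rfl, fun i hi => by simp [Nat.le_zero.mp hi]⟩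
  | succ n ih =>
    obtain ⟨W, hlen, hW⟩ := ih (fun i => f (i + 1)) fun i hi => hf (i + 1) (by omega)
    refine ⟨.cons (hf 0 n.succ_pos) W, by simp [hlen], ?_⟩
    rintro (_ | i) hi
    · simp
    · simpa using hW i (by omega)

theorem SimpleGraph.Walk.support_eq_of_length_eq_one {u v : V} {W : G.Walk u v}
    (h : W.length = 1) : W.support = [u, v] := by
  cases W with
  | nil => simp at h
  | cons _ p => cases p with
    | nil => rfl
    | cons _ _ => simp at h

theorem isTolledWalk_iff_isTolledSeq {u v : V} (W : G.Walk u v) :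
    IsTolledWalk G W ↔ IsTolledSeq G W.getVert W.length := by
  have hgetD : ∀ i ≤ W.length, W.support.getD i u = W.getVert i := fun i hi => by
    rw [List.getD_eq_getElem?_getD, ← W.getVert_eq_support_getElem? hi, Option.getD_some]
  constructor
  · rintro (⟨-, h⟩ | ⟨-, h⟩ | ⟨hnadj, hne, -, hfirst, hlast⟩)
    · exact ⟨fun i hi => W.adj_getVert_succ hi, by omega, by omega, by omega, by omega⟩
    · have h1 : W.length = 1 := by simpa using congrArg List.length h
      exact ⟨fun i hi => W.adj_getVert_succ hi, by omega, by omega, by omega, by omega⟩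
    · refine ⟨fun i hi => W.adj_getVert_succ hi, fun _ => ?_, fun _ => ?_, fun i h0 hi => ?_,
        fun i h0 hi => ?_⟩
      · simpa using hne
      · simpa using hnadj
      · simpa only [Walk.getVert_zero, hgetD i hi.le] using hfirst i h0 hi
      · simpa only [Walk.getVert_length, hgetD i hi.le] using hlast i h0 hi
  · intro hW
    obtain h | h | h : W.length = 0 ∨ W.length = 1 ∨ 2 ≤ W.length := by omega
    · exact Or.inl ⟨W.eq_of_length_eq_zero h, h⟩
    · exact Or.inr (Or.inl ⟨W.adj_of_length_eq_one h, W.support_eq_of_length_eq_one h⟩)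
    · refine Or.inr (Or.inr ⟨by simpa using hW.not_adj h, by simpa using hW.ne h, h,
        fun i h0 hi => ?_, fun i h0 hi => ?_⟩)
      · simpa only [Walk.getVert_zero, hgetD i hi.le] using hW.adj_first i h0 hi
      · simpa only [Walk.getVert_length, hgetD i hi.le] using hW.adj_last i h0 hi

namespace IsTolledSeq

variable {f f' : ℕ → V} {n : ℕ}

theorem congr (hf : IsTolledSeq G f n) (h : ∀ i ≤ n, f i = f' i) : IsTolledSeq G f' n where
  adj i hi := by rw [← h i hi.le, ← h (i + 1) hi]; exact hf.adj i hi
  ne hn := by rw [← h 0 n.zero_le, ← h n le_rfl]; exact hf.ne hn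
  not_adj hn := by rw [← h 0 n.zero_le, ← h n le_rfl]; exact hf.not_adj hn
  adj_first i h0 hi := by rw [← h 0 n.zero_le, ← h i hi.le]; exact hf.adj_first i h0 hi
  adj_last i h0 hi := by rw [← h n le_rfl, ← h i hi.le]; exact hf.adj_last i h0 hi

theorem reverse (hf : IsTolledSeq G f n) : IsTolledSeq G (fun i => f (n - i)) n where
  adj i hi := by
    have h := hf.adj (n - (i + 1)) (by omega)
    rwa [show n - (i + 1) + 1 = n - i by omega, G.adj_comm] at h
  ne hn := by simpa using (hf.ne hn).symm
  not_adj hn := by simpa [G.adj_comm] using hf.not_adj hn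
  adj_first i h0 hi := by
    rw [Nat.sub_zero, hf.adj_last (n - i) (by omega) (by omega)]; omega
  adj_last i h0 hi := by
    rw [Nat.sub_self, hf.adj_first (n - i) (by omega) (by omega)]; omega

theorem comp_iff {V' : Type*} {G' : SimpleGraph V'} (φ : G' ↪g G) {f : ℕ → V'} :
    IsTolledSeq G (φ ∘ f) n ↔ IsTolledSeq G' f n := by
  constructor <;> rintro ⟨hadj, hne, hnadj, hfirst, hlast⟩ <;>
    exact ⟨by simpa using hadj, by simpa using hne, by simpa using hnadj, by simpa using hfirst,
      by simpa using hlast⟩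

theorem update_zero (hf : IsTolledSeq G f n) {u : V} (hn : 0 < n) (hu : u ≠ f n)
    (hadj : ∀ i, 0 < i → i ≤ n → (G.Adj u (f i) ↔ G.Adj (f 0) (f i))) :
    IsTolledSeq G (Function.update f 0 u) n where
  adj i hi := by
    rcases i.eq_zero_or_pos with rfl | hi0
    · simpa [Function.update_of_ne] using (hadj 1 one_pos hi).2 (hf.adj 0 hi)
    · simpa [Function.update_of_ne hi0.ne'] using hf.adj i hi
  ne _ := by simpa [Function.update_of_ne hn.ne'] using hu
  not_adj h2 := by
    simpa [Function.update_of_ne hn.ne', hadj n hn le_rfl] using hf.not_adj h2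
  adj_first i h0 hi := by
    simpa [Function.update_of_ne h0.ne', hadj i h0 hi.le] using hf.adj_first i h0 hi
  adj_last i h0 hi := by
    simpa [Function.update_of_ne h0.ne', Function.update_of_ne hn.ne'] using hf.adj_last i h0 hi

/-- Contracts the segment `f (l + 1), …, f (r - 1)` to the single vertex `y`. -/
theorem splice (hf : IsTolledSeq G f n) {l r : ℕ} {y : V} (hlr : l + 2 ≤ r) (hr : r ≤ n)
    (hly : G.Adj (f l) y) (hyr : G.Adj y (f r)) (hfirst : G.Adj (f 0) y ↔ l = 0)
    (hlast : G.Adj (f n) y ↔ r = n) :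
    IsTolledSeq G (fun i => if i ≤ l then f i else if i = l + 1 then y else f (i + (r - l - 2)))
      (n - (r - l - 2)) := by
  have hn : n - (r - l - 2) + (r - l - 2) = n := by omega
  refine ⟨fun i hi => ?_, fun h2 => ?_, fun h2 => ?_, fun i h0 hi => ?_, fun i h0 hi => ?_⟩
  · split_ifs <;> first
      | omega
      | exact hf.adj i (by omega)
      | (obtain rfl : i = l := by omega); exact hly
      | (convert hyr using 2; omega)
      | (convert hf.adj (i + (r - l - 2)) (by omega) using 2; omega)
  all_goals simp only [Nat.zero_le, if_true, if_neg (show ¬ n - (r - l - 2) ≤ l by omega),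
    if_neg (show n - (r - l - 2) ≠ l + 1 by omega), hn]
  · exact hf.ne (by omega)
  · exact hf.not_adj (by omega)
  · split_ifs
    · exact hf.adj_first i h0 (by omega)
    · rw [hfirst]; omega
    · rw [hf.adj_first _ (by omega) (by omega)]; omega
  · split_ifs
    · rw [hf.adj_last i h0 (by omega)]; omega
    · rw [hlast]; omega
    · rw [hf.adj_last _ (by omega) (by omega)]; omega

end IsTolledSeq

theorem mem_tollInterval_iff {u v x : V} :
    x ∈ tollInterval G u v ↔
      ∃ f n, IsTolledSeq G f n ∧ f 0 = u ∧ f n = v ∧ ∃ i ≤ n, f i = x := by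
  constructor
  · rintro ⟨W, hW, hx⟩
    obtain ⟨i, rfl, hi⟩ := W.mem_support_iff_exists_getVert.1 hx
    exact ⟨W.getVert, W.length, (isTolledWalk_iff_isTolledSeq W).1 hW, W.getVert_zero,
      W.getVert_length, i, hi, rfl⟩
  · rintro ⟨f, n, hf, rfl, rfl, i, hi, rfl⟩
    obtain ⟨W, hlen, hW⟩ := Walk.exists_getVert_eq f n hf.adj
    refine ⟨W, (isTolledWalk_iff_isTolledSeq W).2 ?_,
      W.mem_support_iff_exists_getVert.2 ⟨i, hW i hi, by omega⟩⟩
    rw [hlen]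
    exact hf.congr fun j hj => (hW j hj).symm

theorem mem_tollInterval_self (x : V) : x ∈ tollInterval G x x :=
  mem_tollInterval_iff.2 ⟨fun _ => x, 0, ⟨by simp, by simp, by simp, by simp, by simp⟩, rfl, rfl,
    0, le_rfl, rfl⟩

theorem tollInterval_comm (u v : V) : tollInterval G u v = tollInterval G v u := by
  suffices ∀ u v : V, tollInterval G u v ⊆ tollInterval G v u from (this u v).antisymm (this v u)
  intro u v x hx
  obtain ⟨f, n, hf, rfl, rfl, i, hi, rfl⟩ := mem_tollInterval_iff.1 hx
  exact mem_tollInterval_iff.2 ⟨_, n, hf.reverse, by simp, by simp, n - i, by omega,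
    congrArg f (Nat.sub_sub_self hi)⟩

theorem eq_or_eq_of_mem_tollInterval {u v x : V} (huv : u = v ∨ G.Adj u v)
    (hx : x ∈ tollInterval G u v) : x = u ∨ x = v := by
  obtain ⟨f, n, hf, rfl, rfl, i, hi, rfl⟩ := mem_tollInterval_iff.1 hx
  have hn : n < 2 := by
    by_contra! hn
    exact huv.elim (hf.ne hn) (hf.not_adj hn)
  interval_cases n <;> interval_cases i <;> simp

theorem mem_tollInterval_of_adj_of_adj {p q x : V} (hp : G.Adj p x) (hq : G.Adj x q)
    (hpq : p ≠ q) (hnadj : ¬ G.Adj p q) : x ∈ tollInterval G p q := by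
  refine mem_tollInterval_iff.2
    ⟨fun i => if i = 0 then p else if i = 1 then x else q, 2, ⟨fun i hi => ?_, by simpa,
      by simpa, fun i h0 hi => ?_, fun i h0 hi => ?_⟩, rfl, rfl, 1, one_le_two, rfl⟩ <;>
  interval_cases i <;> simp [hp, hq, hq.symm]

theorem map_mem_tollInterval {V' : Type*} {G' : SimpleGraph V'} (φ : G' ↪g G) {p q x : V'}
    (hx : x ∈ tollInterval G' p q) : φ x ∈ tollInterval G (φ p) (φ q) := by
  obtain ⟨f, n, hf, rfl, rfl, i, hi, rfl⟩ := mem_tollInterval_iff.1 hx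
  exact mem_tollInterval_iff.2 ⟨φ ∘ f, n, (IsTolledSeq.comp_iff φ).2 hf, rfl, rfl, i, hi, rfl⟩

theorem IsTollSet.exists_ne_not_adj {T : Set V} (hT : IsTollSet G T) (hG : G ≠ ⊤) :
    ∃ p ∈ T, ∃ q ∈ T, p ≠ q ∧ ¬ G.Adj p q := by
  by_contra! h
  have hmem : ∀ x, x ∈ T := fun x => by
    obtain ⟨u, hu, v, hv, hx⟩ := hT x
    rcases eq_or_eq_of_mem_tollInterval ((em (u = v)).imp_right (h u hu v hv)) hx with rfl | rfl
    <;> assumption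
  exact hG (eq_top_iff.2 fun a b hab => h a (hmem a) b (hmem b) hab)

theorem tollNumber_le_ncard [Finite V] {T : Set V} (hT : IsTollSet G T) :
    tollNumber G ≤ T.ncard :=
  Nat.sInf_le ⟨T, T.toFinite, rfl, hT⟩

theorem exists_isTollSet_ncard_eq_tollNumber [Finite V] (G : SimpleGraph V) :
    ∃ T : Set V, IsTollSet G T ∧ T.ncard = tollNumber G := by
  obtain ⟨T, -, hcard, hT⟩ := Nat.sInf_mem (s := {n | ∃ T : Set V, T.Finite ∧ T.ncard = n ∧
    IsTollSet G T}) ⟨_, Set.univ, Set.toFinite _, rfl,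
      fun x => ⟨x, trivial, x, trivial, mem_tollInterval_self x⟩⟩
  exact ⟨T, hT, hcard⟩

def SimpleGraph.IsModule (G : SimpleGraph V) (M : Set V) : Prop :=
  ∀ ⦃a b y⦄, a ∈ M → b ∈ M → y ∉ M → (G.Adj a y ↔ G.Adj b y)

namespace SimpleGraph.IsModule

variable {M : Set V} {f : ℕ → V} {n : ℕ} {u v x : V}

theorem adj_iff_adj (hM : G.IsModule M) {a b y : V} (ha : a ∈ M) (hb : b ∈ M) (hy : y ∉ M) :
    G.Adj y a ↔ G.Adj y b := by
  rw [G.adj_comm, hM ha hb hy, G.adj_comm]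

theorem notMem_of_isTolledSeq (hM : G.IsModule M) (hf : IsTolledSeq G f n) (h0 : f 0 ∈ M)
    (hn : f n ∉ M) {i : ℕ} (hi0 : 0 < i) (hin : i ≤ n) : f i ∉ M := by
  intro hi
  obtain ⟨j, hij, hjn, hj, hj1⟩ := Nat.exists_le_lt_and_not_succ (P := (f · ∈ M)) hin hi hn
  have hadj : G.Adj (f 0) (f (j + 1)) := (hM hj h0 hj1).1 (hf.adj j hjn)
  obtain hlt | heq := (Nat.succ_le_of_lt hjn).lt_or_eq
  · have := (hf.adj_first (j + 1) j.succ_pos hlt).1 hadj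
    omega
  · exact hf.not_adj (by omega) (heq ▸ hadj)

theorem eq_of_mem_tollInterval (hM : G.IsModule M) (hu : u ∈ M) (hv : v ∉ M) (hxM : x ∈ M)
    (hx : x ∈ tollInterval G u v) : x = u := by
  obtain ⟨f, n, hf, rfl, rfl, i, hi, rfl⟩ := mem_tollInterval_iff.1 hx
  obtain rfl | hi0 := i.eq_zero_or_pos
  · rfl
  · exact absurd hxM (hM.notMem_of_isTolledSeq hf hu hv hi0 hi)

theorem eq_two_of_isTolledSeq (hM : G.IsModule M) (hf : IsTolledSeq G f n) (h0 : f 0 ∈ M)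
    (hn : f n ∈ M) {i : ℕ} (hi : f i ∉ M) (hin : i ≤ n) : n = 2 ∧ i = 1 := by
  -- the first vertex outside `M` is adjacent to both ends, so it sits at position `1 = n - 1`
  obtain ⟨j, -, hji, hj, hj1⟩ := Nat.exists_le_lt_and_not_succ (P := (f · ∈ M)) i.zero_le h0 hi
  have hin' : i ≠ n := by rintro rfl; exact hi hn
  have h1 := (hf.adj_first (j + 1) j.succ_pos (by omega)).1 ((hM hj h0 hj1).1 (hf.adj j (by omega)))
  have h2 := (hf.adj_last (j + 1) j.succ_pos (by omega)).1 ((hM hj hn hj1).1 (hf.adj j (by omega)))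
  omega

theorem mem_tollInterval_of_not_adj (hM : G.IsModule M) (hu : u ∈ M) (hv : v ∈ M) (hxM : x ∉ M)
    (hx : x ∈ tollInterval G u v) {p q : V} (hp : p ∈ M) (hq : q ∈ M) (hpq : p ≠ q)
    (hnadj : ¬ G.Adj p q) : x ∈ tollInterval G p q := by
  obtain ⟨f, n, hf, rfl, rfl, i, hi, rfl⟩ := mem_tollInterval_iff.1 hx
  obtain ⟨rfl, rfl⟩ := hM.eq_two_of_isTolledSeq hf hu hv hxM hi
  exact mem_tollInterval_of_adj_of_adj ((hM hu hp hxM).1 (hf.adj 0 two_pos))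
    ((hM.adj_iff_adj hv hq hxM).1 (hf.adj 1 one_lt_two)) hpq hnadj

theorem mem_tollInterval_of_mem_left (hM : G.IsModule M) {u' : V} (hu : u ∈ M) (hu' : u' ∈ M)
    (hv : v ∉ M) (hxM : x ∉ M) (hx : x ∈ tollInterval G u v) : x ∈ tollInterval G u' v := by
  obtain ⟨f, n, hf, rfl, rfl, i, hi, rfl⟩ := mem_tollInterval_iff.1 hx
  have hi0 : 0 < i := Nat.pos_of_ne_zero (by rintro rfl; exact hxM hu)
  have hf' := hf.update_zero (u := u') (by omega) (fun h => hv (h ▸ hu'))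
    fun j hj0 hjn => hM hu' hu (hM.notMem_of_isTolledSeq hf hu hv hj0 hjn)
  refine mem_tollInterval_iff.2 ⟨_, n, hf', Function.update_self .., ?_, i, hi, ?_⟩ <;>
  simp [Function.update_of_ne, hi0.ne', show n ≠ 0 by omega]

theorem subset_tollInterval (hM : G.IsModule M) (hu : u ∉ M) (hv : v ∉ M) (hxM : x ∈ M)
    (hx : x ∈ tollInterval G u v) : M ⊆ tollInterval G u v := by
  obtain ⟨f, n, hf, rfl, rfl, i, hi, rfl⟩ := mem_tollInterval_iff.1 hx
  obtain ⟨l, -, hli, hl, hl1⟩ :=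
    Nat.exists_le_lt_and_not_succ (P := (f · ∉ M)) i.zero_le hu (not_not.2 hxM)
  obtain ⟨r, hir, hrn, hr, hr1⟩ := Nat.exists_le_lt_and_not_succ (P := (f · ∈ M)) hi hxM hv
  rw [not_not] at hl1
  -- contract the segment `f (l + 1), …, f r` around `x`, which starts and ends in `M`, to `y`
  intro y hy
  have hf' := hf.splice (l := l) (r := r + 1) (y := y) (by omega) hrn
    ((hM.adj_iff_adj hl1 hy hl).1 (hf.adj l (by omega))) ((hM hr hy hr1).1 (hf.adj r hrn))
    (by rw [← hM.adj_iff_adj hl1 hy hu, hf.adj_first (l + 1) l.succ_pos (by omega)]; omega)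
    (by rw [← hM.adj_iff_adj hr hy hv, hf.adj_last r (by omega) hrn]; omega)
  refine mem_tollInterval_iff.2 ⟨_, _, hf', by simp, ?_, l + 1, by omega, by simp⟩
  simp only [if_neg (show ¬ n - (r + 1 - l - 2) ≤ l by omega),
    if_neg (show n - (r + 1 - l - 2) ≠ l + 1 by omega)]
  congr 1
  omega

theorem isTollSet_diff_union (hM : G.IsModule M) {S T : Set V} (hS : IsTollSet G S) {p q : V}
    (hp : p ∈ T ∩ M) (hq : q ∈ T ∩ M) (hpq : p ≠ q) (hnadj : ¬ G.Adj p q)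
    (hcov : ∀ x ∈ M, ∃ u ∈ S \ M ∪ T, ∃ v ∈ S \ M ∪ T, x ∈ tollInterval G u v) :
    IsTollSet G (S \ M ∪ T) := by
  intro x
  by_cases hxM : x ∈ M
  · exact hcov x hxM
  obtain ⟨u, hu, v, hv, hx⟩ := hS x
  wlog huv : u ∈ M ∨ v ∉ M generalizing u v
  · rw [not_or, not_not] at huv
    exact this v hv u hu (tollInterval_comm u v ▸ hx) (Or.inl huv.2)
  by_cases huM : u ∈ M <;> by_cases hvM : v ∈ M
  · exact ⟨p, Or.inr hp.1, q, Or.inr hq.1,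
      hM.mem_tollInterval_of_not_adj huM hvM hxM hx hp.2 hq.2 hpq hnadj⟩
  · exact ⟨p, Or.inr hp.1, v, Or.inl ⟨hv, hvM⟩,
      hM.mem_tollInterval_of_mem_left huM hp.2 hvM hxM hx⟩
  · exact absurd (huv.resolve_left huM) (not_not.2 hvM)
  · exact ⟨u, Or.inl ⟨hu, huM⟩, v, Or.inl ⟨hv, hvM⟩, hx⟩

end SimpleGraph.IsModule

theorem ncard_inter_le_of_isTollSet_diff_union [Finite V] {S M T : Set V}
    (hmin : S.ncard = tollNumber G) (hT : IsTollSet G (S \ M ∪ T)) :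
    (S ∩ M).ncard ≤ T.ncard := by
  have h1 := tollNumber_le_ncard hT
  have h2 := Set.ncard_union_le (S \ M) T
  have h3 := Set.ncard_inter_add_ncard_sdiff_eq_ncard S M
  omega

end General

section lexProd

variable {α β : Type*} (G : SimpleGraph α) (H : SimpleGraph β)

def lexProdLayer (g : α) : H ↪g lexProd G H where
  toFun := Prod.mk g
  inj' := Prod.mk_right_injective g
  map_rel_iff' := by simp [lexProd]

theorem isModule_lexProd_layer (g : α) : (lexProd G H).IsModule (Prod.fst ⁻¹' {g}) := by
  intro a b y (ha : a.1 = g) (hb : b.1 = g) (hy : y.1 ≠ g)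
  simp [lexProd, ha, hb, hy.symm]

variable {G H}

theorem mem_tollInterval_of_mk_mem_tollInterval_lexProd {g : α} {p q h : β}
    (hx : (g, h) ∈ tollInterval (lexProd G H) (g, p) (g, q)) :
    h ∈ tollInterval H p q ∨ h = p ∨ h = q := by
  obtain ⟨f, n, hf, hf0, hfn, i, hi, hfi⟩ := mem_tollInterval_iff.1 hx
  by_cases hlayer : ∀ j ≤ n, (f j).1 = g
  · have hf' : IsTolledSeq H (Prod.snd ∘ f) n :=
      (IsTolledSeq.comp_iff (lexProdLayer G H g)).1
        (hf.congr fun j hj => Prod.ext (hlayer j hj) rfl)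
    exact Or.inl (mem_tollInterval_iff.2 ⟨_, n, hf', by simp [hf0], by simp [hfn], i, hi,
      by simp [hfi]⟩)
  · obtain ⟨j, hj, hjg⟩ := not_forall₂.1 hlayer
    obtain ⟨rfl, rfl⟩ := (isModule_lexProd_layer G H g).eq_two_of_isTolledSeq hf
      (by simp [hf0]) (by simp [hfn]) hjg hj
    interval_cases i
    · simp_all
    · exact absurd (by simp [hfi]) hjg
    · simp_all

theorem isTollSet_snd_image_inter_layer {S : Set (α × β)} {g : α}
    (hcov : ∀ h, ∃ u ∈ S, ∃ v ∈ S, (g, h) ∈ tollInterval (lexProd G H) u v ∧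
      (u ∈ Prod.fst ⁻¹' {g} ∨ v ∈ Prod.fst ⁻¹' {g})) :
    IsTollSet H (Prod.snd '' (S ∩ Prod.fst ⁻¹' {g})) := by
  intro h
  obtain ⟨u, hu, v, hv, hx, huv⟩ := hcov h
  wlog hug : u.1 = g generalizing u v
  · exact this v hv u hu (tollInterval_comm u v ▸ hx) huv.symm (huv.resolve_left hug)
  have hu' : u.2 ∈ Prod.snd '' (S ∩ Prod.fst ⁻¹' {g}) := ⟨u, ⟨hu, hug⟩, rfl⟩
  obtain ⟨g, p⟩ := u
  obtain rfl : g = _ := hug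
  by_cases hvg : v.1 = g
  · have hv' : v.2 ∈ Prod.snd '' (S ∩ Prod.fst ⁻¹' {g}) := ⟨v, ⟨hv, hvg⟩, rfl⟩
    obtain ⟨g', q⟩ := v
    obtain rfl : g' = g := hvg
    rcases mem_tollInterval_of_mk_mem_tollInterval_lexProd hx with hx | rfl | rfl
    · exact ⟨p, hu', q, hv', hx⟩
    · exact ⟨h, hu', h, hu', mem_tollInterval_self h⟩
    · exact ⟨h, hv', h, hv', mem_tollInterval_self h⟩
  · obtain rfl : h = p := congrArg Prod.snd
      ((isModule_lexProd_layer G H g).eq_of_mem_tollInterval rfl hvg rfl hx)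
    exact ⟨h, hu', h, hu', mem_tollInterval_self h⟩

theorem ncard_inter_layer_le [Finite α] [Finite β] {S : Set (α × β)}
    (hS : IsTollSet (lexProd G H) S) (hmin : S.ncard = tollNumber (lexProd G H)) {g : α}
    {T : Set β} {p q : β} (hp : p ∈ T) (hq : q ∈ T) (hpq : p ≠ q) (hnadj : ¬ H.Adj p q)
    (hcov : ∀ h, ∃ u ∈ S \ Prod.fst ⁻¹' {g} ∪ Prod.mk g '' T,
      ∃ v ∈ S \ Prod.fst ⁻¹' {g} ∪ Prod.mk g '' T, (g, h) ∈ tollInterval (lexProd G H) u v) :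
    (S ∩ Prod.fst ⁻¹' {g}).ncard ≤ T.ncard := by
  have hT := (isModule_lexProd_layer G H g).isTollSet_diff_union hS
    (T := Prod.mk g '' T) (p := (g, p)) (q := (g, q)) ⟨⟨p, hp, rfl⟩, rfl⟩
    ⟨⟨q, hq, rfl⟩, rfl⟩ (by simpa using hpq) (by simpa [lexProd] using hnadj)
    (by rintro ⟨g', h⟩ (rfl : g' = g); exact hcov h)
  exact (ncard_inter_le_of_isTollSet_diff_union hmin hT).trans Set.ncard_image_le

theorem ncard_inter_layer_le_tollNumber [Finite α] [Finite β] (hH : H ≠ ⊤) {S : Set (α × β)}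
    (hS : IsTollSet (lexProd G H) S) (hmin : S.ncard = tollNumber (lexProd G H)) (g : α) :
    (S ∩ Prod.fst ⁻¹' {g}).ncard ≤ tollNumber H := by
  obtain ⟨T, hT, hTcard⟩ := exists_isTollSet_ncard_eq_tollNumber H
  obtain ⟨p, hp, q, hq, hpq, hnadj⟩ := hT.exists_ne_not_adj hH
  refine hTcard ▸ ncard_inter_layer_le hS hmin hp hq hpq hnadj fun h => ?_
  obtain ⟨a, ha, b, hb, hh⟩ := hT h
  exact ⟨_, Or.inr ⟨a, ha, rfl⟩, _, Or.inr ⟨b, hb, rfl⟩,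
    map_mem_tollInterval (lexProdLayer G H g) hh⟩

theorem tollNumber_le_ncard_inter_layer [Finite α] [Finite β] (hH : H ≠ ⊤) {S : Set (α × β)}
    (hS : IsTollSet (lexProd G H) S) (hmin : S.ncard = tollNumber (lexProd G H)) (g : α)
    (hS3 : 2 < (S ∩ Prod.fst ⁻¹' {g}).ncard) :
    tollNumber H ≤ (S ∩ Prod.fst ⁻¹' {g}).ncard := by
  by_cases hcov : ∀ h, ∃ u ∈ S, ∃ v ∈ S, (g, h) ∈ tollInterval (lexProd G H) u v ∧
      (u ∈ Prod.fst ⁻¹' {g} ∨ v ∈ Prod.fst ⁻¹' {g})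
  · exact (tollNumber_le_ncard (isTollSet_snd_image_inter_layer hcov)).trans Set.ncard_image_le
  push Not at hcov
  obtain ⟨h, hh⟩ := hcov
  obtain ⟨u, hu, v, hv, hx⟩ := hS (g, h)
  obtain ⟨huM, hvM⟩ := hh u hu v hv hx
  obtain ⟨p, q, hpq, hnadj⟩ := ne_top_iff_exists_not_adj.1 hH
  have := ncard_inter_layer_le hS hmin (T := {p, q}) (by simp) (by simp) hpq hnadj fun _ =>
    ⟨u, Or.inl ⟨hu, huM⟩, v, Or.inl ⟨hv, hvM⟩,
      (isModule_lexProd_layer G H g).subset_tollInterval huM hvM rfl hx rfl⟩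
  rw [Set.ncard_pair hpq] at this
  omega

end lexProd

theorem stmt18_general {V W : Type*} [Fintype V] [Fintype W]
    (G : SimpleGraph V) (H : SimpleGraph W) (hH : H ≠ ⊤)
    (S : Set (V × W)) (hS : IsTollSet (lexProd G H) S)
    (hmin : S.ncard = tollNumber (lexProd G H)) :
    ∀ g : V, (S ∩ ({g} ×ˢ (Set.univ : Set W))).ncard ∈
      ({0, 1, 2, tollNumber H} : Set ℕ) := by
  intro g
  rw [Set.prod_univ]
  have hle := ncard_inter_layer_le_tollNumber hH hS hmin g
  by_cases hsmall : (S ∩ Prod.fst ⁻¹' {g}).ncard ≤ 2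
  · obtain h | h | h : (S ∩ Prod.fst ⁻¹' {g}).ncard = 0 ∨ (S ∩ Prod.fst ⁻¹' {g}).ncard = 1 ∨
        (S ∩ Prod.fst ⁻¹' {g}).ncard = 2 := by omega
    all_goals simp [h]
  · exact Or.inr <| Or.inr <| Or.inr <|
      hle.antisymm (tollNumber_le_ncard_inter_layer hH hS hmin g (by omega))

theorem stmt18 {V W : Type*} [Fintype V] [Fintype W] [Nontrivial V] [Nontrivial W]
    (G : SimpleGraph V) (H : SimpleGraph W) (hH : H ≠ ⊤)
    (S : Set (V × W)) (hS : IsTollSet (lexProd G H) S)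
    (hmin : S.ncard = tollNumber (lexProd G H)) :
    ∀ g : V, (S ∩ ({g} ×ˢ (Set.univ : Set W))).ncard ∈
      ({0, 1, 2, tollNumber H} : Set ℕ) :=
  stmt18_general G H hH S hS hmin
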